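/- arXiv:1305.5778 — 5 statements merged into one kernel-verified Lean document; each statement's English description precedes it below -/
import Mathlib

section
/- Let m ≥ 1, D = C_{2^m} × C_{2^m}, and let θ be an automorphism of D of order 3. Then θ permutes the three involutions of D transitively (i.e., cyclically). -/
lemma aux_two_torsion (m : ℕ) (hm : 1 ≤ m) (v : ZMod (2^m)) :
    v + v = 0 ↔ v = 0 ∨ v = ((2^(m-1) : ℕ) : ZMod (2^m)) := by
  haveI : NeZero ((2:ℕ)^m) := ⟨by positivity⟩
  have hsplit : (2:ℕ)^m = 2 * 2^(m-1) := by
    conv_lhs => rw [show m = (m-1)+1 by omega]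
    ring
  constructor
  · intro hv
    have h1 : ((v.val + v.val : ℕ) : ZMod (2^m)) = 0 := by
      push_cast [ZMod.natCast_rightInverse v]
      exact hv
    rw [ZMod.natCast_eq_zero_iff] at h1
    rcases h1 with ⟨c, hc⟩
    have hc' : v.val + v.val = 2 * (2^(m-1) * c) := by rw [hc, hsplit]; ring
    have h2 : v.val = 2^(m-1) * c := by linarith
    have h3 : v.val < 2 * 2^(m-1) := by rw [← hsplit]; exact ZMod.val_lt v
    have hc2 : c < 2 := by nlinarith [Nat.one_le_two_pow (n := m-1)]
    interval_cases c
    · left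
      rw [← ZMod.natCast_rightInverse v, h2]; simp
    · right
      rw [← ZMod.natCast_rightInverse v, h2]; push_cast; ring
  · rintro (rfl | rfl)
    · simp
    · rw [← Nat.cast_add, show (2:ℕ)^(m-1) + 2^(m-1) = 2^m by rw [← two_mul, ← pow_succ']; congr 1; omega,
        ZMod.natCast_self]

lemma aux_ne_zero (m : ℕ) (hm : 1 ≤ m) :
    ((2^(m-1) : ℕ) : ZMod (2^m)) ≠ 0 := by
  haveI : NeZero ((2:ℕ)^m) := ⟨by positivity⟩
  rw [Ne, ZMod.natCast_eq_zero_iff]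
  intro h
  have := Nat.le_of_dvd (by positivity) h
  have : (2:ℕ)^(m-1) < 2^m := Nat.pow_lt_pow_right one_lt_two (by omega)
  omega

lemma aux_div_two (m : ℕ) (hm : 1 ≤ m) (v : ZMod (2^m))
    (hv : (2^(m-1)) • v = 0) : ∃ w : ZMod (2^m), v = w + w := by
  haveI : NeZero ((2:ℕ)^m) := ⟨by positivity⟩
  have h1 : ((2^(m-1) * v.val : ℕ) : ZMod (2^m)) = 0 := by
    rw [Nat.cast_mul, ZMod.natCast_rightInverse v, ← nsmul_eq_mul]
    exact_mod_cast hv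
  rw [ZMod.natCast_eq_zero_iff] at h1
  rcases h1 with ⟨c, hc⟩
  have hsplit : (2:ℕ)^m = 2^(m-1) * 2 := by
    conv_lhs => rw [show m = (m-1)+1 by omega]
    rw [pow_succ]
  have hpos : 0 < (2:ℕ)^(m-1) := by positivity
  have hc2 : 2^(m-1) * v.val = 2^(m-1) * (2 * c) := by rw [hc, hsplit]; ring
  have h2 : v.val = 2 * c := Nat.eq_of_mul_eq_mul_left hpos hc2
  refine ⟨(c : ZMod (2^m)), ?_⟩
  rw [← ZMod.natCast_rightInverse v, h2, ← Nat.cast_add]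
  congr 1; omega

lemma aux_fix_all {D : Type*} [AddCommGroup D] (θ : AddAut D) (a b c : D)
    (hab : a ≠ b) (hac : a ≠ c) (hbc : b ≠ c)
    (hb : addOrderOf b = 2) (hc : addOrderOf c = 2)
    (mem : ∀ w : D, addOrderOf w = 2 → w = a ∨ w = b ∨ w = c)
    (hcube : ∀ z, θ (θ (θ z)) = z)
    (hfa : θ a = a) : ∀ w, addOrderOf w = 2 → θ w = w := by
  have ho : ∀ z : D, addOrderOf (θ z) = addOrderOf z := fun z =>
    addOrderOf_injective (θ : D ≃+ D).toAddMonoidHom θ.injective z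
  have hθb : θ b = b ∨ θ b = c := by
    rcases mem (θ b) (by rw [ho]; exact hb) with h | h | h
    · exact absurd (θ.injective (h.trans hfa.symm)) hab.symm
    · exact Or.inl h
    · exact Or.inr h
  rcases hθb with hb' | hb'
  · have hc' : θ c = c := by
      rcases mem (θ c) (by rw [ho]; exact hc) with h | h | h
      · exact absurd (θ.injective (h.trans hfa.symm)) hac.symm
      · exact absurd (θ.injective (h.trans hb'.symm)) hbc.symm
      · exact h
    intro w hw
    rcases mem w hw with rfl | rfl | rfl
    · exact hfa
    · exact hb'
    · exact hc'
  · have hc' : θ c = b := by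
      rcases mem (θ c) (by rw [ho]; exact hc) with h | h | h
      · exact absurd (θ.injective (h.trans hfa.symm)) hac.symm
      · exact h
      · exact absurd (θ.injective (h.trans hb'.symm)) hbc.symm
    exfalso
    have h3 := hcube b
    rw [hb', hc', hb'] at h3
    exact hbc h3.symm

lemma aux_trans_core {D : Type*} [AddCommGroup D] (θ : AddAut D) (x y z : D)
    (hxy : x ≠ y) (hxz : x ≠ z) (hyz : y ≠ z)
    (hx : addOrderOf x = 2) (hz : addOrderOf z = 2)
    (mem : ∀ w : D, addOrderOf w = 2 → w = x ∨ w = y ∨ w = z)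
    (hcube : ∀ w, θ (θ (θ w)) = w)
    (hnof : ∀ w, addOrderOf w = 2 → θ w ≠ w) :
    ∃ k : ℕ, (k • θ) x = y := by
  have ho : ∀ w : D, addOrderOf (θ w) = addOrderOf w := fun w =>
    addOrderOf_injective (θ : D ≃+ D).toAddMonoidHom θ.injective w
  rcases mem (θ x) (by rw [ho]; exact hx) with h | h | h
  · exact absurd h (hnof x hx)
  · exact ⟨1, by simpa using h⟩
  · rcases mem (θ z) (by rw [ho]; exact hz) with g | g | g
    · exfalso
      apply hnof x hx
      have h3 := hcube x
      rw [h, g] at h3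
      exact h3
    · refine ⟨2, ?_⟩
      rw [two_nsmul, AddAut.add_apply, h, g]
    · exact absurd g (hnof z hz)

lemma aux_card_smul (m : ℕ) (x : ZMod (2^m) × ZMod (2^m)) : (2^m : ℕ) • x = 0 := by
  have h : ∀ v : ZMod (2^m), (2^m : ℕ) • v = 0 := fun v => by
    rw [nsmul_eq_mul, ZMod.natCast_self, zero_mul]
  exact Prod.ext (by simp only [Prod.smul_fst, Prod.fst_zero]; exact h x.1) (by simp only [Prod.smul_snd, Prod.snd_zero]; exact h x.2)

lemma aux_three_smul (m : ℕ) (y : ZMod (2^m) × ZMod (2^m)) (h3 : (3:ℕ) • y = 0) : y = 0 := by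
  have h2 : (2^m : ℕ) • y = 0 := aux_card_smul m y
  have d3 : addOrderOf y ∣ 3 := addOrderOf_dvd_of_nsmul_eq_zero h3
  have d2 : addOrderOf y ∣ 2^m := addOrderOf_dvd_of_nsmul_eq_zero h2
  have hcop : Nat.Coprime 3 (2^m) := Nat.Coprime.pow_right m (by norm_num)
  have : addOrderOf y ∣ 1 := hcop ▸ Nat.dvd_gcd d3 d2
  rw [← AddMonoid.addOrderOf_eq_one_iff]
  exact Nat.dvd_one.mp this

lemma aux_theta_eq_one (m : ℕ) (hm : 1 ≤ m) (θ : AddAut (ZMod (2^m) × ZMod (2^m)))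
    (hfix : ∀ z : ZMod (2^m) × ZMod (2^m), z + z = 0 → θ z = z)
    (hcube : ∀ z, θ (θ (θ z)) = z) : ∀ z, θ z = z := by
  let D := ZMod (2^m) × ZMod (2^m)
  let φ : D →+ D := (θ : D ≃+ D).toAddMonoidHom - AddMonoidHom.id D
  have hφ : ∀ x : D, φ x = θ x - x := fun x => rfl
  have hθφ : ∀ x : D, θ x = x + φ x := by intro x; rw [hφ]; abel
  have tor : ∀ x : D, (2^(m-1) : ℕ) • φ x = 0 := by
    intro x
    have h2 : ((2^(m-1) : ℕ) • x) + ((2^(m-1) : ℕ) • x) = 0 := by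
      rw [← add_nsmul, show (2:ℕ)^(m-1) + 2^(m-1) = 2^m by rw [← two_mul, ← pow_succ']; congr 1; omega]
      exact aux_card_smul m x
    have h3 := hfix _ h2
    calc (2^(m-1) : ℕ) • φ x = φ ((2^(m-1) : ℕ) • x) := (map_nsmul φ _ x).symm
    _ = 0 := by rw [hφ, h3, sub_self]
  have div2 : ∀ x : D, ∃ z : D, φ x = z + z := by
    intro x
    have t1 : (2^(m-1) : ℕ) • (φ x).1 = 0 := by
      have := congrArg Prod.fst (tor x); exact this
    have t2 : (2^(m-1) : ℕ) • (φ x).2 = 0 := by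
      have := congrArg Prod.snd (tor x); exact this
    obtain ⟨w1, hw1⟩ := aux_div_two m hm (φ x).1 t1
    obtain ⟨w2, hw2⟩ := aux_div_two m hm (φ x).2 t2
    exact ⟨(w1, w2), Prod.ext hw1 hw2⟩
  have cube_eq : ∀ x : D, (3:ℕ) • φ x + (3:ℕ) • φ (φ x) + φ (φ (φ x)) = 0 := by
    intro x
    have key : θ (θ (θ x)) = x + ((3:ℕ) • φ x + (3:ℕ) • φ (φ x) + φ (φ (φ x))) := by
      rw [hθφ (θ (θ x)), hθφ (θ x), hθφ x]
      simp only [map_add]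
      abel
    have h := hcube x
    rw [key] at h
    exact add_eq_left.mp h
  have pow2 : ∀ (k : ℕ) (y : D), (2^(k+1) : ℕ) • y = (2^k : ℕ) • (y + y) := by
    intro k y
    rw [pow_succ, mul_smul, two_nsmul]
  have desc : ∀ k : ℕ, (∀ x : D, (2^(k+1) : ℕ) • φ x = 0) → ∀ x : D, (2^k : ℕ) • φ x = 0 := by
    intro k hk x
    obtain ⟨z, hz⟩ := div2 x
    have e2 : (2^k : ℕ) • φ (φ x) = 0 := by
      rw [hz, map_add, ← pow2]; exact hk z
    have e3 : (2^k : ℕ) • φ (φ (φ x)) = 0 := by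
      rw [hz, map_add φ z z, map_add φ (φ z) (φ z), ← pow2]; exact hk (φ z)
    have h0' := congrArg (fun y : D => (2^k : ℕ) • y) (cube_eq x)
    simp only [smul_add, smul_zero] at h0'
    rw [smul_comm ((2:ℕ)^k) (3:ℕ), smul_comm ((2:ℕ)^k) (3:ℕ), e2, smul_zero, add_zero,
      e3, add_zero] at h0'
    exact aux_three_smul m _ h0'
  have main : ∀ j : ℕ, ∀ x : D, (2^(m-1-j) : ℕ) • φ x = 0 := by
    intro j
    induction j with
    | zero => simpa using tor
    | succ j ih =>
      by_cases hj : m - 1 - j = 0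
      · intro x
        rw [show m-1-(j+1) = m-1-j by omega]
        exact ih x
      · have e : m-1-j = (m-1-(j+1)) + 1 := by omega
        exact desc _ (fun x => by rw [← e]; exact ih x)
  intro z
  have h0 := main (m-1) z
  rw [show m-1-(m-1) = 0 by omega, pow_zero, one_smul] at h0
  have hz := hθφ z
  rw [h0, add_zero] at hz
  exact hz

lemma aux_classify (m : ℕ) (hm : 1 ≤ m) (w : ZMod (2^m) × ZMod (2^m)) :
    addOrderOf w = 2 ↔
      (w = (((2^(m-1) : ℕ) : ZMod (2^m)), 0) ∨ w = (0, ((2^(m-1) : ℕ) : ZMod (2^m))) ∨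
        w = (((2^(m-1) : ℕ) : ZMod (2^m)), ((2^(m-1) : ℕ) : ZMod (2^m)))) := by
  haveI : Fact (Nat.Prime 2) := ⟨Nat.prime_two⟩
  set H : ZMod (2^m) := ((2^(m-1) : ℕ) : ZMod (2^m)) with hH
  have hHH : H + H = 0 := (aux_two_torsion m hm H).mpr (Or.inr rfl)
  have hH0 : H ≠ 0 := aux_ne_zero m hm
  constructor
  · intro hw
    have h20 : w + w = 0 := by
      have := addOrderOf_nsmul_eq_zero w
      rw [hw, two_nsmul] at this
      exact this
    have hne : w ≠ 0 := by
      rintro rfl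
      simp at hw
    have c1 : w.1 + w.1 = 0 := congrArg Prod.fst h20
    have c2 : w.2 + w.2 = 0 := congrArg Prod.snd h20
    rcases (aux_two_torsion m hm w.1).mp c1 with h1 | h1 <;>
      rcases (aux_two_torsion m hm w.2).mp c2 with h2 | h2
    · exact absurd (Prod.ext h1 h2) hne
    · exact Or.inr (Or.inl (Prod.ext h1 h2))
    · exact Or.inl (Prod.ext h1 h2)
    · exact Or.inr (Or.inr (Prod.ext h1 h2))
  · intro hw
    have key : ∀ v : ZMod (2^m) × ZMod (2^m), v + v = 0 → v ≠ 0 → addOrderOf v = 2 := by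
      intro v hv hv0
      exact addOrderOf_eq_prime (by rw [two_nsmul]; exact hv) hv0
    have hne : ∀ u v : ZMod (2^m), u = H → (u, v) ≠ 0 := by
      rintro u v rfl h
      exact hH0 (congrArg Prod.fst h)
    rcases hw with rfl | rfl | rfl
    · exact key _ (Prod.ext hHH (add_zero 0)) (hne _ _ rfl)
    · refine key _ (Prod.ext (add_zero 0) hHH) ?_
      intro h
      exact hH0 (congrArg Prod.snd h)
    · exact key _ (Prod.ext hHH hHH) (hne _ _ rfl)

theorem order_three_aut_permutes_involutions_transitively (m : ℕ) (hm : 1 ≤ m)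
    (θ : AddAut (ZMod (2 ^ m) × ZMod (2 ^ m))) (hθ : addOrderOf θ = 3) :
    ∀ x y : ZMod (2 ^ m) × ZMod (2 ^ m),
      addOrderOf x = 2 → addOrderOf y = 2 → ∃ k : ℕ, (k • θ) x = y := by
  intro x y hx hy
  haveI : Fact (Nat.Prime 2) := ⟨Nat.prime_two⟩
  set H : ZMod (2^m) := ((2^(m-1) : ℕ) : ZMod (2^m)) with hHdef
  set a : ZMod (2^m) × ZMod (2^m) := (H, 0) with hadef
  set b : ZMod (2^m) × ZMod (2^m) := (0, H) with hbdef
  set c : ZMod (2^m) × ZMod (2^m) := (H, H) with hcdef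
  have hH0 : H ≠ 0 := aux_ne_zero m hm
  have mem : ∀ w, addOrderOf w = 2 → w = a ∨ w = b ∨ w = c := fun w hw =>
    (aux_classify m hm w).mp hw
  have ha : addOrderOf a = 2 := (aux_classify m hm a).mpr (Or.inl rfl)
  have hb : addOrderOf b = 2 := (aux_classify m hm b).mpr (Or.inr (Or.inl rfl))
  have hc : addOrderOf c = 2 := (aux_classify m hm c).mpr (Or.inr (Or.inr rfl))
  have hab : a ≠ b := fun h => hH0 (congrArg Prod.fst h)
  have hac : a ≠ c := fun h => hH0 ((congrArg Prod.snd h).symm)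
  have hbc : b ≠ c := fun h => hH0 ((congrArg Prod.fst h).symm)
  have hcube : ∀ z, θ (θ (θ z)) = z := by
    have h3 : 3 • θ = 0 := by rw [← hθ]; exact addOrderOf_nsmul_eq_zero θ
    intro z
    have e : (3 • θ) z = θ (θ (θ z)) := by
      rw [succ_nsmul, AddAut.add_apply, succ_nsmul, AddAut.add_apply, one_nsmul]
    rw [← e, h3]
    rfl
  have hnof : ∀ w, addOrderOf w = 2 → θ w ≠ w := by
    intro w hw hfw
    have hfixinv : ∀ u, addOrderOf u = 2 → θ u = u := by
      rcases mem w hw with rfl | rfl | rfl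
      · exact aux_fix_all θ a b c hab hac hbc hb hc mem hcube hfw
      · exact aux_fix_all θ b a c hab.symm hbc hac ha hc
          (fun u hu => by rcases mem u hu with h | h | h <;> tauto) hcube hfw
      · exact aux_fix_all θ c a b hac.symm hbc.symm hab ha hb
          (fun u hu => by rcases mem u hu with h | h | h <;> tauto) hcube hfw
    have hfix : ∀ z, z + z = 0 → θ z = z := by
      intro z hz
      by_cases h0 : z = 0
      · subst h0; exact map_zero θ
      · exact hfixinv z (addOrderOf_eq_prime (by rw [two_nsmul]; exact hz) h0)
    have hone : ∀ z, θ z = z := aux_theta_eq_one m hm θ hfix hcube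
    have hθ1 : θ = 0 := AddEquiv.ext hone
    rw [hθ1] at hθ
    simp at hθ
  rcases eq_or_ne x y with rfl | hxy
  · exact ⟨0, by simp⟩
  rcases mem x hx with rfl | rfl | rfl <;> rcases mem y hy with rfl | rfl | rfl
  · exact absurd rfl hxy
  · exact aux_trans_core θ a b c hab hac hbc ha hc mem hcube hnof
  · exact aux_trans_core θ a c b hac hab hbc.symm ha hb
      (fun u hu => by rcases mem u hu with h | h | h <;> tauto) hcube hnof
  · exact aux_trans_core θ b a c hab.symm hbc hac hb hc
      (fun u hu => by rcases mem u hu with h | h | h <;> tauto) hcube hnof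
  · exact absurd rfl hxy
  · exact aux_trans_core θ b c a hbc hab.symm hac.symm hb ha
      (fun u hu => by rcases mem u hu with h | h | h <;> tauto) hcube hnof
  · exact aux_trans_core θ c a b hac.symm hbc.symm hab hc hb
      (fun u hu => by rcases mem u hu with h | h | h <;> tauto) hcube hnof
  · exact aux_trans_core θ c b a hbc.symm hac.symm hab.symm hc ha
      (fun u hu => by rcases mem u hu with h | h | h <;> tauto) hcube hnof
  · exact absurd rfl hxy
end

section
/- Let n ≥ 1 and consider the type A_n root datum: fundamental roots α_1,…,α_n with pairing ⟨α_i, α_j^∨⟩ equal to 2 if i = j, −1 if |i − j| = 1, and 0 otherwise. Suppose J ⊆ {1,…,n} is nonempty, satisfies ⟨α_i, α_j^∨⟩ = 0 for all distinct i, j ∈ J, and for every i ∈ {1,…,n} the sum Σ_{j ∈ J} ⟨α_i, α_j^∨⟩ is even. Then n is odd and J = {1, 3, 5, …, n}. -/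
/-- The Cartan pairing of type `A_n` on indices `1,…,n`:
`⟨α_i, α_j^∨⟩ = 2` if `i = j`, `-1` if `|i - j| = 1`, and `0` otherwise. -/
def cartanA (i j : ℕ) : ℤ :=
  if i = j then 2 else if i + 1 = j ∨ j + 1 = i then -1 else 0

theorem typeA_orthogonal_central_subset (n : ℕ) (hn : 1 ≤ n) (J : Finset ℕ)
    (hJ : J ⊆ Finset.Icc 1 n) (hne : J.Nonempty)
    (horth : ∀ i ∈ J, ∀ j ∈ J, i ≠ j → cartanA i j = 0)
    (heven : ∀ i ∈ Finset.Icc 1 n, Even (∑ j ∈ J, cartanA i j)) :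
    Odd n ∧ J = (Finset.Icc 1 n).filter (fun i => Odd i) := by
  -- no adjacent pairs in J
  have adj : ∀ i ∈ J, i + 1 ∉ J := by
    intro i hi h
    have := horth i hi (i + 1) h (by omega)
    unfold cartanA at this
    split_ifs at this <;> omega
  -- the parity lemma
  have parity : ∀ i, 1 ≤ i → i ≤ n → i ∉ J → ((i + 1 ∈ J) ↔ (i - 1 ∈ J)) := by
    intro i h1 h2 hi
    have key : ∑ j ∈ J, cartanA i j =
        (if i + 1 ∈ J then (-1 : ℤ) else 0) + (if i - 1 ∈ J then (-1 : ℤ) else 0) := by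
      rw [← Finset.sum_ite_eq' J (i + 1) (fun _ => (-1 : ℤ)),
        ← Finset.sum_ite_eq' J (i - 1) (fun _ => (-1 : ℤ)), ← Finset.sum_add_distrib]
      refine Finset.sum_congr rfl fun j hj => ?_
      have hji : j ≠ i := fun h => hi (h ▸ hj)
      unfold cartanA
      split_ifs <;> omega
    have h := heven i (by simp; omega)
    rw [key] at h
    by_cases ha : i + 1 ∈ J <;> by_cases hb : i - 1 ∈ J <;>
      simp only [ha, hb, if_true, if_false, iff_true, iff_false] at h ⊢ <;>
      first
        | tauto
        | (rw [Int.even_iff] at h; omega)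
  -- 1 ∈ J
  have h1J : 1 ∈ J := by
    set m := J.min' hne with hm
    have hmJ : m ∈ J := J.min'_mem hne
    have hm1 : 1 ≤ m ∧ m ≤ n := by have := hJ hmJ; simp at this; exact this
    by_cases hm2 : m = 1
    · rwa [hm2] at hmJ
    · exfalso
      have hlt : m - 1 ∉ J := fun h => by have := J.min'_le _ h; omega
      have hp := parity (m - 1) (by omega) (by omega) hlt
      have : m - 1 + 1 ∈ J := by
        have : m - 1 + 1 = m := by omega
        rwa [this]
      have h2 : m - 1 - 1 ∈ J := hp.mp this
      have := J.min'_le _ h2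
      omega
  -- membership characterization
  have key : ∀ i, 1 ≤ i → i ≤ n → (i ∈ J ↔ Odd i) := by
    intro i
    induction i using Nat.strong_induction_on with
    | _ i ih =>
      intro h1 h2
      rcases Nat.lt_or_ge i 2 with hi2 | hi2
      · have : i = 1 := by omega
        subst this
        simp [h1J]
      · rcases Nat.even_or_odd i with he | ho
        · -- i even: i-1 odd is in J, so i ∉ J
          have hi1 : i - 1 ∈ J := by
            refine (ih (i - 1) (by omega) (by omega) (by omega)).mpr ?_
            rcases he with ⟨k, hk⟩; exact ⟨k - 1, by omega⟩
          have : i ∉ J := by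
            intro h
            have := adj (i - 1) hi1
            have e : i - 1 + 1 = i := by omega
            rw [e] at this
            exact this h
          simp [this, Nat.not_odd_iff_even]; exact he
        · -- i odd, i ≥ 3: i-1 even not in J, parity forces i ∈ J
          have hi1 : i - 1 ∉ J := by
            intro h
            have := (ih (i - 1) (by omega) (by omega) (by omega)).mp h
            rcases ho with ⟨k, hk⟩; rcases this with ⟨l, hl⟩; omega
          have hi3 : 3 ≤ i := by rcases ho with ⟨k, hk⟩; omega
          have hi2' : i - 2 ∈ J := by
            refine (ih (i - 2) (by omega) (by omega) (by omega)).mpr ?_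
            rcases ho with ⟨k, hk⟩; exact ⟨k - 1, by omega⟩
          have hp := parity (i - 1) (by omega) (by omega) hi1
          have e1 : i - 1 + 1 = i := by omega
          have e2 : i - 1 - 1 = i - 2 := by omega
          rw [e1, e2] at hp
          simp [hp.mpr hi2', ho]
  -- n is odd
  have hnodd : Odd n := by
    rcases Nat.even_or_odd n with he | ho
    · exfalso
      have hn2 : 2 ≤ n := by rcases he with ⟨k, hk⟩; omega
      have hn1 : n - 1 ∈ J := by
        refine (key (n - 1) (by omega) (by omega)).mpr ?_
        rcases he with ⟨k, hk⟩; exact ⟨k - 1, by omega⟩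
      have hnJ : n ∉ J := by
        intro h
        have := (key n (by omega) (by omega)).mp h
        rcases he with ⟨k, hk⟩; rcases this with ⟨l, hl⟩; omega
      have hp := parity n (by omega) (by omega) hnJ
      have : n + 1 ∉ J := by intro h; have := hJ h; simp at this
      have : n - 1 ∉ J := fun h => this (hp.mpr h)
      exact this hn1
    · exact ho
  refine ⟨hnodd, ?_⟩
  ext i
  simp only [Finset.mem_filter, Finset.mem_Icc]
  constructor
  · intro h
    have hi := hJ h
    simp at hi
    exact ⟨hi, (key i hi.1 hi.2).mp h⟩
  · rintro ⟨⟨ha, hb⟩, ho⟩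
    exact (key i ha hb).mpr ho
end

section
/- Let n ≥ 2 and consider the type B_n Cartan pairing on indices {1,…,n}: ⟨α_i, α_i^∨⟩ = 2 for all i; ⟨α_i, α_j^∨⟩ = −1 when |i − j| = 1 and both i, j ≤ n−1; ⟨α_{n−1}, α_n^∨⟩ = −2; ⟨α_n, α_{n−1}^∨⟩ = −1; and ⟨α_i, α_j^∨⟩ = 0 otherwise. Suppose J ⊆ {1,…,n} is nonempty, ⟨α_i, α_j^∨⟩ = 0 for all distinct i, j ∈ J, and for every i the sum Σ_{j ∈ J} ⟨α_i, α_j^∨⟩ is even. Then J = {n}. -/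
/-- The Cartan pairing of type `B_n` on indices `1,…,n`: nodes `1,…,n-1` form a
chain and the double arrow points from `α_{n-1}` to `α_n`, so that
`⟨α_{n-1}, α_n^∨⟩ = -2` and `⟨α_n, α_{n-1}^∨⟩ = -1`. -/
def cartanB (n i j : ℕ) : ℤ :=
  if i = j then 2
  else if (i + 1 = j ∨ j + 1 = i) ∧ i ≤ n - 1 ∧ j ≤ n - 1 then -1
  else if i = n - 1 ∧ j = n then -2
  else if i = n ∧ j = n - 1 then -1
  else 0

lemma sum_three_aux (J : Finset ℕ) (f : ℕ → ℤ) (a b c : ℕ) (hab : a ≠ b) (hac : a ≠ c)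
    (hbc : b ≠ c) (h0 : ∀ j, j ≠ a → j ≠ b → j ≠ c → f j = 0) :
    ∑ j ∈ J, f j =
      (if a ∈ J then f a else 0) + (if b ∈ J then f b else 0) + (if c ∈ J then f c else 0) := by
  have key : ∀ j ∈ J, f j =
      (if j = a then f a else 0) + (if j = b then f b else 0) + (if j = c then f c else 0) := by
    intro j _
    by_cases h1 : j = a
    · subst h1; simp [hab, hac]
    by_cases h2 : j = b
    · subst h2; simp [hab.symm, hbc]
    by_cases h3 : j = c
    · subst h3; simp [hac.symm, hbc.symm]
    · simp [h1, h2, h3, h0 j h1 h2 h3]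
  rw [Finset.sum_congr rfl key, Finset.sum_add_distrib, Finset.sum_add_distrib]
  simp [Finset.sum_ite_eq']

theorem typeB_orthogonal_central_subset (n : ℕ) (hn : 2 ≤ n) (J : Finset ℕ)
    (hJ : J ⊆ Finset.Icc 1 n) (hne : J.Nonempty)
    (horth : ∀ i ∈ J, ∀ j ∈ J, i ≠ j → cartanB n i j = 0)
    (heven : ∀ i ∈ Finset.Icc 1 n, Even (∑ j ∈ J, cartanB n i j)) :
    J = {n} := by
  have h0J : (0 : ℕ) ∉ J := fun h => by simpa using (Finset.mem_Icc.mp (hJ h)).1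
  have key : ∀ d : ℕ, 1 ≤ n - 1 - d → n - 1 - d ∉ J := by
    intro d
    induction d using Nat.strong_induction_on with
    | _ d ih =>
      rcases d with _ | _ | d
      · -- d = 0 : n - 1 ∉ J, using parity at i = n
        intro hk hmem
        simp only [Nat.sub_zero] at hk hmem
        have hs := heven n (by simp [Finset.mem_Icc]; omega)
        rw [sum_three_aux J _ n (n-1) 0 (by omega) (by omega) (by omega)
          (fun j hj1 hj2 hj3 => by unfold cartanB; split_ifs <;> omega)] at hs
        have e1 : cartanB n n n = 2 := by unfold cartanB; split_ifs <;> omega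
        have e2 : cartanB n n (n-1) = -1 := by unfold cartanB; split_ifs <;> omega
        rw [e1, e2, if_pos hmem, if_neg h0J] at hs
        rcases hs with ⟨m, hm⟩
        split_ifs at hm <;> omega
      · -- d = 1 : n - 2 ∉ J, using parity at i = n - 1
        intro hk hmem
        have hn3 : 3 ≤ n := by omega
        have hs := heven (n-1) (by simp [Finset.mem_Icc]; omega)
        rw [sum_three_aux J _ (n-1-1) (n-1) n (by omega) (by omega) (by omega)
          (fun j hj1 hj2 hj3 => by unfold cartanB; split_ifs <;> omega)] at hs
        have e1 : cartanB n (n-1) (n-1-1) = -1 := by unfold cartanB; split_ifs <;> omega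
        have e2 : cartanB n (n-1) (n-1) = 2 := by unfold cartanB; split_ifs <;> omega
        have e3 : cartanB n (n-1) n = -2 := by unfold cartanB; split_ifs <;> omega
        rw [e1, e2, e3, if_pos hmem] at hs
        rcases hs with ⟨m, hm⟩
        split_ifs at hm <;> omega
      · -- d + 2 : use parity at i = k + 1 where k = n - 1 - (d + 2)
        intro hk hmem
        set k := n - 1 - (d + 2) with hkdef
        have hbk : 1 ≤ k := hk
        have hbk2 : k + 2 ≤ n - 1 := by omega
        have ihk : k + 2 ∉ J := by
          have h2 : n - 1 - d = k + 2 := by omega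
          have := ih d (by omega) (by omega)
          rwa [h2] at this
        have hs := heven (k+1) (by simp [Finset.mem_Icc]; omega)
        rw [sum_three_aux J _ k (k+1) (k+2) (by omega) (by omega) (by omega)
          (fun j hj1 hj2 hj3 => by unfold cartanB; split_ifs <;> omega)] at hs
        have e1 : cartanB n (k+1) k = -1 := by unfold cartanB; split_ifs <;> omega
        have e2 : cartanB n (k+1) (k+1) = 2 := by unfold cartanB; split_ifs <;> omega
        have e3 : cartanB n (k+1) (k+2) = -1 := by unfold cartanB; split_ifs <;> omega
        rw [e1, e2, e3, if_pos hmem, if_neg ihk] at hs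
        rcases hs with ⟨m, hm⟩
        split_ifs at hm <;> omega
  refine Finset.eq_singleton_iff_nonempty_unique_mem.mpr ⟨hne, fun x hx => ?_⟩
  have hxb := Finset.mem_Icc.mp (hJ hx)
  by_contra hxn
  have hx1 : 1 ≤ x ∧ x ≤ n - 1 := by omega
  have := key (n - 1 - x) (by omega)
  rw [show n - 1 - (n - 1 - x) = x by omega] at this
  exact this hx
end

section
/- Let n ≥ 3 and consider the type C_n Cartan pairing on indices {1,…,n}: ⟨α_i, α_i^∨⟩ = 2 for all i; ⟨α_i, α_j^∨⟩ = −1 when |i − j| = 1 and both i, j ≤ n−1; ⟨α_n, α_{n−1}^∨⟩ = −2; ⟨α_{n−1}, α_n^∨⟩ = −1; and ⟨α_i, α_j^∨⟩ = 0 otherwise. Suppose J ⊆ {1,…,n} is nonempty, ⟨α_i, α_j^∨⟩ = 0 for all distinct i, j ∈ J, and for every i the sum Σ_{j ∈ J} ⟨α_i, α_j^∨⟩ is even. Then: if n is even, J = {1, 3, …, n−3, n−1}, and if n is odd, J = {1, 3, …, n−2, n}. -/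
/-- The Cartan pairing of type `C_n` on indices `1,…,n`: nodes `1,…,n-1` form a
chain and the double arrow points from `α_n` to `α_{n-1}`, so that
`⟨α_n, α_{n-1}^∨⟩ = -2` and `⟨α_{n-1}, α_n^∨⟩ = -1`. -/
def cartanC (n i j : ℕ) : ℤ :=
  if i = j then 2
  else if (i + 1 = j ∨ j + 1 = i) ∧ i ≤ n - 1 ∧ j ≤ n - 1 then -1
  else if i = n ∧ j = n - 1 then -2
  else if i = n - 1 ∧ j = n then -1
  else 0

lemma cartanC_row_parity (n i j : ℕ) (hn : 3 ≤ n) (hi1 : 1 ≤ i) (hi2 : i ≤ n - 1)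
    (hj1 : 1 ≤ j) (hj2 : j ≤ n) :
    ((cartanC n i j : ZMod 2)) =
      (if i - 1 = j then 1 else 0) + (if i + 1 = j then 1 else 0) := by
  unfold cartanC
  split_ifs <;> first | decide | omega

lemma parity_key {J : Finset ℕ} {a b : ℕ} (hab : a ≠ b) {f : ℕ → ℤ}
    (hf : ∀ j ∈ J, ((f j : ZMod 2)) = (if a = j then 1 else 0) + (if b = j then 1 else 0))
    (h : Even (∑ j ∈ J, f j)) : ((a ∈ J) ↔ (b ∈ J)) := by
  have h0 : ((∑ j ∈ J, f j : ℤ) : ZMod 2) = 0 := by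
    rw [ZMod.intCast_zmod_eq_zero_iff_dvd]
    exact h.two_dvd
  push_cast at h0
  rw [Finset.sum_congr rfl hf, Finset.sum_add_distrib,
    Finset.sum_ite_eq, Finset.sum_ite_eq] at h0
  split_ifs at h0 <;> simp_all <;> exact absurd h0 (by decide)

theorem typeC_orthogonal_central_subset (n : ℕ) (hn : 3 ≤ n) (J : Finset ℕ)
    (hJ : J ⊆ Finset.Icc 1 n) (hne : J.Nonempty)
    (horth : ∀ i ∈ J, ∀ j ∈ J, i ≠ j → cartanC n i j = 0)
    (heven : ∀ i ∈ Finset.Icc 1 n, Even (∑ j ∈ J, cartanC n i j)) :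
    (Even n → J = (Finset.Icc 1 (n - 1)).filter (fun i => Odd i)) ∧
    (Odd n → J = (Finset.Icc 1 n).filter (fun i => Odd i)) := by
  have hmem : ∀ j ∈ J, 1 ≤ j ∧ j ≤ n := by
    intro j hj
    simpa [Finset.mem_Icc] using hJ hj
  -- The key link: for 1 ≤ i ≤ n-1, (i-1 ∈ J) ↔ (i+1 ∈ J)
  have key : ∀ i, 1 ≤ i → i ≤ n - 1 → ((i - 1 ∈ J) ↔ (i + 1 ∈ J)) := by
    intro i hi1 hi2
    apply parity_key (a := i - 1) (b := i + 1) (by omega)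
    · intro j hj
      obtain ⟨hj1, hj2⟩ := hmem j hj
      exact cartanC_row_parity n i j hn hi1 hi2 hj1 hj2
    · exact heven i (by simp [Finset.mem_Icc]; omega)
  have h0 : (0 : ℕ) ∉ J := fun h => by have := hmem 0 h; omega
  -- all even numbers are not in J
  have hE : ∀ k, 2 * k ∉ J := by
    intro k
    induction k with
    | zero => simpa using h0
    | succ m ih =>
      intro hmem2
      obtain ⟨h1, h2⟩ := hmem (2 * (m + 1)) hmem2
      have hk := key (2 * m + 1) (by omega) (by omega)
      simp only [show 2 * m + 1 - 1 = 2 * m by omega, show 2 * m + 1 + 1 = 2 * (m + 1) by ring]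
        at hk
      exact ih (hk.mpr hmem2)
  -- all odd numbers ≤ n are in J iff 1 ∈ J
  have hO : ∀ k, 2 * k + 1 ≤ n → ((2 * k + 1 ∈ J) ↔ (1 ∈ J)) := by
    intro k
    induction k with
    | zero => simp
    | succ m ih =>
      intro hle
      have hk := key (2 * m + 2) (by omega) (by omega)
      simp only [show 2 * m + 2 - 1 = 2 * m + 1 by omega,
        show 2 * m + 2 + 1 = 2 * (m + 1) + 1 by ring] at hk
      rw [← hk, ih (by omega)]
  have h1J : 1 ∈ J := by
    obtain ⟨x, hx⟩ := hne
    obtain ⟨hx1, hx2⟩ := hmem x hx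
    rcases Nat.even_or_odd x with ⟨m, hm⟩ | ⟨m, hm⟩
    · exact absurd hx (by rw [show x = 2 * m by omega]; exact hE m)
    · exact (hO m (by omega)).mp (by rwa [show 2 * m + 1 = x by omega])
  have hchar : J = (Finset.Icc 1 n).filter (fun i => Odd i) := by
    ext k
    simp only [Finset.mem_filter, Finset.mem_Icc]
    constructor
    · intro hk
      obtain ⟨h1, h2⟩ := hmem k hk
      refine ⟨⟨h1, h2⟩, ?_⟩
      rcases Nat.even_or_odd k with ⟨m, hm⟩ | hodd
      · exact absurd hk (by rw [show k = 2 * m by omega]; exact hE m)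
      · exact hodd
    · rintro ⟨⟨h1, h2⟩, m, hm⟩
      have := (hO m (by omega)).mpr h1J
      rwa [show k = 2 * m + 1 by omega]
  constructor
  · intro hnev
    rw [hchar]
    ext k
    simp only [Finset.mem_filter, Finset.mem_Icc]
    obtain ⟨p, hp⟩ := hnev
    constructor
    · rintro ⟨⟨h1, h2⟩, m, hm⟩
      exact ⟨⟨h1, by omega⟩, m, hm⟩
    · rintro ⟨⟨h1, h2⟩, m, hm⟩
      exact ⟨⟨h1, by omega⟩, m, hm⟩
  · intro _
    exact hchar
end

section
/- Let q be an odd prime power with q ≡ 3 (mod 8) or q ≡ 5 (mod 8). Then the Sylow 2-subgroups of SL_2(F_q) are quaternion groups of order 8, and consequently the Sylow 2-subgroups of PSL_2(F_q) = SL_2(F_q)/{±1} are Klein four-groups (in particular abelian). -/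
open Matrix

section Arith

lemma v2_odd {n : ℕ} (h : n % 2 = 1) : n.factorization 2 = 0 :=
  Nat.factorization_eq_zero_of_not_dvd (by omega)

lemma v2_two {n : ℕ} (h : n % 4 = 2) : n.factorization 2 = 1 := by
  obtain ⟨k, hk, hko⟩ : ∃ k, n = 2 * k ∧ k % 2 = 1 := ⟨n / 2, by omega, by omega⟩
  subst hk
  rw [Nat.factorization_mul (by norm_num) (by omega)]
  simp [Nat.Prime.factorization Nat.prime_two, v2_odd hko]

lemma v2_four {n : ℕ} (h : n % 8 = 4) : n.factorization 2 = 2 := by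
  obtain ⟨k, hk, hko⟩ : ∃ k, n = 4 * k ∧ k % 2 = 1 := ⟨n / 4, by omega, by omega⟩
  subst hk
  rw [Nat.factorization_mul (by norm_num) (by omega),
    show (4 : ℕ) = 2 ^ 2 by norm_num, Nat.Prime.factorization_pow Nat.prime_two]
  simp [Nat.Prime.factorization Nat.prime_two, v2_odd hko]

lemma v2_card {q : ℕ} (hq : q % 8 = 3 ∨ q % 8 = 5) :
    (((q + 1) * q * (q - 1)).factorization) 2 = 3 := by
  have h1 : q + 1 ≠ 0 := by omega
  have h2 : q ≠ 0 := by omega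
  rw [Nat.factorization_mul (Nat.mul_ne_zero h1 h2) (by omega),
    Nat.factorization_mul h1 h2]
  simp only [Finsupp.coe_add, Pi.add_apply]
  rcases hq with h | h
  · rw [v2_four (by omega), v2_odd (by omega), v2_two (by omega)]
  · rw [v2_two (by omega), v2_odd (by omega), v2_four (by omega)]

end Arith

variable {F : Type} [Field F] [Fintype F]

lemma SL_card : Nat.card (SpecialLinearGroup (Fin 2) F) * (Fintype.card F - 1)
    = Nat.card (GL (Fin 2) F) := by
  classical
  set d : GL (Fin 2) F →* Fˣ := Matrix.GeneralLinearGroup.det with hd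
  have hsurj : Function.Surjective d := by
    intro u
    refine ⟨⟨diagonal ![u.val, 1], diagonal ![(u⁻¹ : Fˣ).val, 1], ?_, ?_⟩, ?_⟩
    · rw [diagonal_mul_diagonal]
      ext i j
      fin_cases i <;> fin_cases j <;> simp
    · rw [diagonal_mul_diagonal]
      ext i j
      fin_cases i <;> fin_cases j <;> simp
    · ext
      simp [hd, Matrix.GeneralLinearGroup.det]
  have hker : Nat.card d.ker = Nat.card (SpecialLinearGroup (Fin 2) F) := by
    refine Nat.card_congr
      ⟨fun A => ⟨A.val.val, ?_⟩, fun A => ⟨SpecialLinearGroup.toGL A, ?_⟩, ?_, ?_⟩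
    · have := A.prop
      rw [MonoidHom.mem_ker] at this
      have := congrArg Units.val this
      simpa [hd] using this
    · rw [MonoidHom.mem_ker]
      ext
      simpa [hd] using A.prop
    · intro A; ext : 2 <;> rfl
    · intro A; rfl
  have h1 : Nat.card (GL (Fin 2) F) = Nat.card (GL (Fin 2) F ⧸ d.ker) * Nat.card d.ker :=
    Subgroup.card_eq_card_quotient_mul_card_subgroup _
  have h2 : Nat.card (GL (Fin 2) F ⧸ d.ker) = Nat.card Fˣ :=
    Nat.card_congr (QuotientGroup.quotientKerEquivOfSurjective d hsurj).toEquiv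
  rw [h1, h2, hker, Nat.card_eq_fintype_card (α := Fˣ), Fintype.card_units, mul_comm]

lemma SL_card' (hq3 : 3 ≤ Fintype.card F) :
    Nat.card (SpecialLinearGroup (Fin 2) F)
      = (Fintype.card F + 1) * Fintype.card F * (Fintype.card F - 1) := by
  obtain ⟨m, hm⟩ : ∃ m, Fintype.card F = m + 1 := ⟨Fintype.card F - 1, by omega⟩
  have hGL := Matrix.card_GL_field (𝔽 := F) 2
  rw [hm] at hGL
  have hprod : (∏ i : Fin 2, ((m+1) ^ 2 - (m+1) ^ (i : ℕ))) =
      ((m+1)^2 - 1) * ((m+1)^2 - (m+1)) := by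
    rw [Fin.prod_univ_two]; norm_num
  have e1 : (m+1)^2 - 1 = (m+2) * m := by ring_nf; generalize m^2 = s; omega
  have e2 : (m+1)^2 - (m+1) = (m+1) * m := by ring_nf; generalize m^2 = s; omega
  have key := SL_card (F := F)
  rw [hm] at key
  have h3 : Nat.card (SpecialLinearGroup (Fin 2) F) * m = ((m+2) * (m+1) * m) * m := by
    rw [show m + 1 - 1 = m from rfl] at key
    rw [key, hGL, hprod, e1, e2]; ring
  have hmpos : 0 < m := by omega
  rw [hm]
  simpa [Nat.add_sub_cancel] using Nat.eq_of_mul_eq_mul_right hmpos h3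

/-- the negative of the identity in `SL₂` -/
def cneg : SpecialLinearGroup (Fin 2) F :=
  ⟨!![-1, 0; 0, -1], by simp [det_fin_two_of]⟩

lemma cneg_mul_cneg : (cneg : SpecialLinearGroup (Fin 2) F) * cneg = 1 := by
  apply Subtype.ext
  show (!![(-1:F), 0; 0, -1] : Matrix (Fin 2) (Fin 2) F) * !![-1,0;0,-1] = 1
  ext i j
  fin_cases i <;> fin_cases j <;> simp [Matrix.mul_apply, Fin.sum_univ_two]

lemma cneg_ne_one (hne : (-1 : F) ≠ 1) : (cneg : SpecialLinearGroup (Fin 2) F) ≠ 1 := by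
  intro h
  have := congrArg (fun X => X.val 0 0) h
  simp [cneg] at this
  exact hne this

lemma cneg_mem_center : (cneg : SpecialLinearGroup (Fin 2) F) ∈
    Subgroup.center (SpecialLinearGroup (Fin 2) F) := by
  rw [Matrix.SpecialLinearGroup.mem_center_iff]
  refine ⟨-1, by norm_num, ?_⟩
  show (scalar (Fin 2)) (-1 : F) = (cneg : SpecialLinearGroup (Fin 2) F).val
  ext i j
  fin_cases i <;> fin_cases j <;> simp [cneg]

lemma mem_center_cases (hne : (-1 : F) ≠ 1) {g : SpecialLinearGroup (Fin 2) F}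
    (hg : g ∈ Subgroup.center (SpecialLinearGroup (Fin 2) F)) : g = 1 ∨ g = cneg := by
  rw [Matrix.SpecialLinearGroup.mem_center_iff] at hg
  obtain ⟨r, hr, hscal⟩ := hg
  rw [Fintype.card_fin] at hr
  have hr' : r = 1 ∨ r = -1 := by
    have : (r - 1) * (r + 1) = 0 := by linear_combination hr
    rcases mul_eq_zero.mp this with h | h
    · left; linear_combination h
    · right; linear_combination h
  rcases hr' with rfl | rfl
  · left
    apply Subtype.ext
    simp [← hscal]
  · right
    apply Subtype.ext
    rw [← hscal]
    ext i j
    fin_cases i <;> fin_cases j <;> simp [cneg]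

lemma involution_central (hne : (-1 : F) ≠ 1) (h2 : (2 : F) ≠ 0)
    {g : SpecialLinearGroup (Fin 2) F} (h : g ^ 2 = 1) :
    g ∈ Subgroup.center (SpecialLinearGroup (Fin 2) F) := by
  have hM : g.val * g.val = 1 := by
    have := congrArg Subtype.val h
    rwa [pow_two] at this
  have hdet : g.val.det = 1 := g.prop
  rw [Matrix.det_fin_two] at hdet
  have e00 := congrArg (fun N => N 0 0) hM
  have e01 := congrArg (fun N => N 0 1) hM
  have e10 := congrArg (fun N => N 1 0) hM
  simp only [Matrix.mul_apply, Fin.sum_univ_two, Matrix.one_apply] at e00 e01 e10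
  norm_num at e00 e01 e10
  set A := g.val 0 0
  set B := g.val 0 1
  set C' := g.val 1 0
  set D := g.val 1 1
  by_cases htr : A + D = 0
  · exfalso
    have hD : D = -A := by linear_combination htr
    rw [hD] at hdet
    apply h2
    linear_combination -e00 - hdet
  · have hB : B = 0 := by
      have : B * (A + D) = 0 := by linear_combination e01
      exact (mul_eq_zero.mp this).resolve_right htr
    have hC : C' = 0 := by
      have : C' * (A + D) = 0 := by linear_combination e10
      exact (mul_eq_zero.mp this).resolve_right htr
    have hA2 : A * A = 1 := by rw [hB] at e00; linear_combination e00
    have hDA : D = A := by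
      have : A * (D - A) = 0 := by
        rw [hB, hC] at hdet
        linear_combination hdet - hA2
      rcases mul_eq_zero.mp this with h | h
      · exfalso; rw [h] at hA2; simp at hA2
      · linear_combination h
    rw [Matrix.SpecialLinearGroup.mem_center_iff]
    refine ⟨A, ?_, ?_⟩
    · rw [Fintype.card_fin, pow_two]; exact hA2
    · show (scalar (Fin 2)) A = g.val
      ext i j
      fin_cases i <;> fin_cases j <;> simp [Matrix.scalar_apply] <;>
        first | rfl | exact hB.symm | exact hC.symm | exact hDA.symm

lemma exists_q8 (hch : ringChar F ≠ 2) :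
    ∃ f : QuaternionGroup 2 →* SpecialLinearGroup (Fin 2) F, Function.Injective f := by
  have hprime : (ringChar F).Prime := CharP.char_is_prime F (ringChar F)
  haveI : NeZero (ringChar F) := ⟨hprime.ne_zero⟩
  obtain ⟨a', b', hab'⟩ := CharP.sq_add_sq F (ringChar F) (-1)
  set a : F := (a' : F)
  set b : F := (b' : F)
  have hab : a ^ 2 + b ^ 2 = -1 := by push_cast at hab' ⊢; exact_mod_cast hab'
  have hne : (-1 : F) ≠ 1 := Ring.neg_one_ne_one_of_char_ne_two hch
  set I : SpecialLinearGroup (Fin 2) F :=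
    ⟨!![a, b; b, -a], by simp [det_fin_two_of]; linear_combination -hab⟩ with hIdef
  set J : SpecialLinearGroup (Fin 2) F :=
    ⟨!![0, 1; -1, 0], by simp [det_fin_two_of]⟩ with hJdef
  set C : SpecialLinearGroup (Fin 2) F :=
    ⟨!![-1, 0; 0, -1], by simp [det_fin_two_of]⟩ with hCdef
  have hI2 : I * I = C := by
    apply Subtype.ext
    show (!![a, b; b, -a] : Matrix (Fin 2) (Fin 2) F) * !![a, b; b, -a] = !![-1,0;0,-1]
    ext i j
    fin_cases i <;> fin_cases j <;> simp [Matrix.mul_apply, Fin.sum_univ_two] <;>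
      first | linear_combination hab | ring1
  have hJ2 : J * J = C := by
    apply Subtype.ext
    show (!![(0:F), 1; -1, 0] : Matrix (Fin 2) (Fin 2) F) * !![0, 1; -1, 0] = !![-1,0;0,-1]
    rw [Matrix.mul_fin_two]; norm_num
  have hC2 : C * C = 1 := by
    apply Subtype.ext
    show (!![(-1:F), 0; 0, -1] : Matrix (Fin 2) (Fin 2) F) * !![-1,0;0,-1] = 1
    ext i j
    fin_cases i <;> fin_cases j <;> simp [Matrix.mul_apply, Fin.sum_univ_two]
  have hI4 : I ^ 4 = 1 := by
    rw [show (4:ℕ) = 2 + 2 from rfl, pow_add, pow_two, hI2, hC2]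
  have hIJ : I * J = J * I ^ 3 := by
    have h3 : I ^ 3 = C * I := by rw [pow_succ, pow_two, hI2]
    rw [h3]
    apply Subtype.ext
    show (!![a, b; b, -a] : Matrix (Fin 2) (Fin 2) F) * !![0, 1; -1, 0]
        = !![(0:F), 1; -1, 0] * (!![(-1:F), 0; 0, -1] * !![a, b; b, -a])
    rw [Matrix.mul_fin_two, Matrix.mul_fin_two, Matrix.mul_fin_two]
    congr 1 <;> ring
  have hIconj : ∀ m : ℕ, I ^ m * J = J * I ^ (3 * m) := by
    intro m
    induction m with
    | zero => simp
    | succ m ih =>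
      calc I ^ (m+1) * J = I ^ m * (I * J) := by rw [pow_succ, mul_assoc]
        _ = I ^ m * J * I ^ 3 := by rw [hIJ, mul_assoc]
        _ = J * I ^ (3*m) * I ^ 3 := by rw [ih]
        _ = J * I ^ (3*(m+1)) := by rw [mul_assoc, ← pow_add]; ring_nf
  have hmod : ∀ {s t : ℕ}, s % 4 = t % 4 → I ^ s = I ^ t := by
    intro s t h
    rw [pow_eq_pow_mod s hI4, pow_eq_pow_mod t hI4, h]
  have hxx : ∀ s t : ℕ, (J * I ^ s) * (J * I ^ t) = I ^ (2 + 3*s + t) := by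
    intro s t
    calc (J * I ^ s) * (J * I ^ t) = J * (I ^ s * J * I ^ t) := by
          rw [mul_assoc, mul_assoc]
      _ = J * (J * I ^ (3*s) * I ^ t) := by rw [hIconj]
      _ = (J * J) * (I ^ (3*s) * I ^ t) := by rw [mul_assoc, mul_assoc]
      _ = I ^ 2 * I ^ (3*s + t) := by rw [hJ2, ← hI2, ← pow_two, pow_add]
      _ = I ^ (2 + 3*s + t) := by rw [← pow_add]; ring_nf
  have hval : ∀ i : ZMod (2*2), (i.val : ℕ) < 4 := fun i => i.val_lt
  set f0 : QuaternionGroup 2 → SpecialLinearGroup (Fin 2) F :=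
    fun x => match x with
      | QuaternionGroup.a i => I ^ i.val
      | QuaternionGroup.xa i => J * I ^ i.val with hf0
  have hmul : ∀ x y, f0 (x * y) = f0 x * f0 y := by
    rintro (i | i) (j | j)
    · show I ^ ((i + j).val) = I ^ i.val * I ^ j.val
      rw [← pow_add]
      refine hmod ?_
      rw [ZMod.val_add]
      have := hval i; have := hval j
      omega
    · show J * I ^ ((j - i).val) = I ^ i.val * (J * I ^ j.val)
      have hv : ((j - i).val + i.val) % 4 = j.val % 4 := by
        rw [← ZMod.val_add, sub_add_cancel]
        exact (Nat.mod_eq_of_lt (hval j)).symm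
      rw [← mul_assoc, hIconj, mul_assoc, ← pow_add]
      have h1 := hval i
      have h2 := hval j
      have h3 := hval (j - i)
      exact congrArg (fun x => J * x) (hmod (by omega))
    · show J * I ^ ((i + j).val) = (J * I ^ i.val) * I ^ j.val
      rw [mul_assoc, ← pow_add]
      have := hval i; have := hval j
      exact congrArg (fun x => J * x) (hmod (by rw [ZMod.val_add]; omega))
    · show I ^ (((2:ℕ) + j - i : ZMod (2*2)).val) = (J * I ^ i.val) * (J * I ^ j.val)
      rw [hxx]
      have hv : ((((2:ℕ) : ZMod (2*2)) + j - i).val + i.val) % 4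
          = ((((2:ℕ) : ZMod (2*2)) + j).val) % 4 := by
        rw [← ZMod.val_add, sub_add_cancel]
        exact (Nat.mod_eq_of_lt (hval _)).symm
      have hv2 : ((((2:ℕ):ZMod (2*2)) + j).val) % 4 = (2 + j.val) % 4 := by
        rw [ZMod.val_add, ZMod.val_natCast]
        omega
      refine hmod ?_
      have := hval i; have := hval j; have := hval (((2:ℕ):ZMod (2*2)) + j - i)
      omega
  set f : QuaternionGroup 2 →* SpecialLinearGroup (Fin 2) F :=
    { toFun := f0
      map_one' := by show I ^ (0 : ZMod (2*2)).val = 1; simp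
      map_mul' := hmul } with hf
  refine ⟨f, ?_⟩
  rw [← f.ker_eq_bot_iff, eq_bot_iff]
  intro x hx
  have hCne : C ≠ 1 := by
    intro h
    have := congrArg (fun X => X.val 0 0) h
    simp at this
    exact hne this
  have hIne : I ≠ 1 := fun h => hCne (by rw [← hI2, h, mul_one])
  have hI3ne : I ^ 3 ≠ 1 := by
    intro h
    apply hIne
    have : I ^ 4 = I ^ 3 * I := by rw [pow_succ]
    rw [hI4, h, one_mul] at this
    exact this.symm
  have hpow_ne : ∀ v : ℕ, v < 4 → I ^ v = 1 → v = 0 := by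
    intro v hv h
    interval_cases v
    · rfl
    · exact absurd (by simpa using h) hIne
    · exact absurd (by rw [pow_two, hI2] at h; exact h) hCne
    · exact absurd h hI3ne
  rw [Subgroup.mem_bot]
  rw [MonoidHom.mem_ker] at hx
  match x with
  | QuaternionGroup.a i =>
    have : I ^ i.val = 1 := hx
    have h0 : i.val = 0 := hpow_ne _ (hval i) this
    have : i = 0 := by
      have := (ZMod.val_eq_zero (n := 2*2) i).mp h0
      exact this
    rw [this]; rfl
  | QuaternionGroup.xa i =>
    exfalso
    have hx' : J * I ^ i.val = 1 := hx
    have hv := hval i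
    interval_cases h : i.val
    · rw [pow_zero, mul_one] at hx'
      have := congrArg (fun X => X.val 0 1) hx'
      simp [hJdef] at this
    · rw [pow_one] at hx'
      have := congrArg (fun X => X.val 0 0) hx'
      have h2 := congrArg (fun X => X.val 1 1) hx'
      simp only [Matrix.SpecialLinearGroup.coe_mul] at this h2
      simp [hJdef, hIdef, Matrix.SpecialLinearGroup.coe_mul, Matrix.mul_fin_two, Matrix.mul_apply, Fin.sum_univ_two] at this h2
      rw [this] at h2
      exact hne h2
    · rw [pow_two, hI2] at hx'
      have := congrArg (fun X => X.val 0 0) hx'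
      simp only [Matrix.SpecialLinearGroup.coe_mul] at this
      simp [hJdef, hCdef, Matrix.SpecialLinearGroup.coe_mul, Matrix.mul_apply, Fin.sum_univ_two] at this
    · have hJI : J = I := by
        have h4 := congrArg (fun X => X * I) hx'
        simp only [mul_assoc, ← pow_succ, hI4, mul_one, one_mul] at h4
        exact h4
      have e1 := congrArg (fun X => X.val 0 1) hJI
      have e2 := congrArg (fun X => X.val 1 0) hJI
      simp [hJdef, hIdef] at e1 e2
      rw [← e1] at e2
      exact hne e2

theorem sylow_two_of_SL2_and_PSL2 (F : Type) [Field F] [Fintype F]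
    (hq : Fintype.card F % 8 = 3 ∨ Fintype.card F % 8 = 5) :
    (∀ P : Sylow 2 (Matrix.SpecialLinearGroup (Fin 2) F),
       Nonempty (P ≃* QuaternionGroup 2)) ∧
    (∀ P : Sylow 2 (Matrix.SpecialLinearGroup (Fin 2) F ⧸
        Subgroup.center (Matrix.SpecialLinearGroup (Fin 2) F)),
       Nonempty (P ≃* (Multiplicative (ZMod 2) × Multiplicative (ZMod 2)))) := by
  classical
  have hq3 : 3 ≤ Fintype.card F := by omega
  have hch : ringChar F ≠ 2 := by
    intro h
    have := (FiniteField.even_card_iff_char_two (F := F)).mp h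
    omega
  have hne : (-1 : F) ≠ 1 := Ring.neg_one_ne_one_of_char_ne_two hch
  have h2 : (2 : F) ≠ 0 := by
    intro h
    apply hne
    linear_combination -h
  set G := Matrix.SpecialLinearGroup (Fin 2) F with hG
  haveI : Finite G := Finite.of_injective (fun A => A.val) Subtype.val_injective
  haveI : Fact (Nat.Prime 2) := ⟨Nat.prime_two⟩
  have hcard : Nat.card G = (Fintype.card F + 1) * Fintype.card F * (Fintype.card F - 1) :=
    SL_card' hq3
  have hfact : (Nat.card G).factorization 2 = 3 := by rw [hcard]; exact v2_card hq
  obtain ⟨f, hf⟩ := exists_q8 (F := F) hch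
  have hHcard : Nat.card f.range = 8 := by
    rw [Nat.card_congr (MonoidHom.ofInjective hf).toEquiv.symm, Nat.card_eq_fintype_card,
      QuaternionGroup.card]
  obtain ⟨Q, hQ⟩ := (IsPGroup.of_card (show Nat.card f.range = 2 ^ 3 by rw [hHcard]; norm_num)).exists_le_sylow
  have hQcard : Nat.card Q = 8 := by
    rw [Q.card_eq_multiplicity, hfact]
    norm_num
  have hHQ : f.range = Q.toSubgroup :=
    Subgroup.eq_of_le_of_card_ge hQ (by rw [hQcard, hHcard])
  have part1 : ∀ P : Sylow 2 G, Nonempty (P ≃* QuaternionGroup 2) := by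
    intro P
    exact ⟨(Sylow.equiv P Q).trans
      ((MulEquiv.subgroupCongr hHQ).symm.trans (MonoidHom.ofInjective hf).symm)⟩
  refine ⟨part1, ?_⟩
  -- part 2
  set Z := Subgroup.center G with hZdef
  have hZeq : Z = Subgroup.zpowers (cneg : G) := by
    apply le_antisymm
    · intro g hg
      rcases mem_center_cases hne hg with rfl | rfl
      · exact Subgroup.one_mem _
      · exact Subgroup.mem_zpowers _
    · rw [Subgroup.zpowers_le]
      exact cneg_mem_center
  have hordc : orderOf (cneg : G) = 2 :=
    orderOf_eq_prime (by rw [pow_two]; exact cneg_mul_cneg) (cneg_ne_one hne)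
  have hZcard : Nat.card Z = 2 := by
    rw [hZeq, Nat.card_zpowers, hordc]
  have hquot : Nat.card (G ⧸ Z) * 2 = Nat.card G := by
    rw [Subgroup.card_eq_card_quotient_mul_card_subgroup Z, hZcard]
  have hqne : Nat.card (G ⧸ Z) ≠ 0 := Nat.card_pos.ne'
  have hfact2 : (Nat.card (G ⧸ Z)).factorization 2 = 2 := by
    have key : (Nat.card (G ⧸ Z)).factorization 2 + (2:ℕ).factorization 2 = 3 := by
      rw [← Finsupp.add_apply, ← Nat.factorization_mul hqne two_ne_zero, hquot, hfact]
    have h22 : (2:ℕ).factorization 2 = 1 := by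
      simp [Nat.Prime.factorization Nat.prime_two]
    omega
  intro P
  have hPcard : Nat.card P = 4 := by
    rw [P.card_eq_multiplicity, hfact2]
    norm_num
  have hexp : ∀ x : ↥P.toSubgroup, x ^ 2 = 1 := by
    intro x
    have hx4 : (x : G ⧸ Z) ^ 4 = 1 := by
      have : x ^ 4 = 1 := by
        have := pow_card_eq_one' (G := ↥P.toSubgroup) (x := x)
        rw [hPcard] at this
        exact this
      have := congrArg (Subgroup.subtype _) this
      simpa using this
    obtain ⟨g, hg⟩ := QuotientGroup.mk_surjective (x : G ⧸ Z)
    have hg4 : g ^ 4 ∈ Z := by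
      rw [← QuotientGroup.eq_one_iff, QuotientGroup.mk_pow, hg, hx4]
    rcases mem_center_cases hne hg4 with hg1 | hgc
    · -- g^4 = 1, so g^2 is central
      have : (g ^ 2) ^ 2 = 1 := by rw [← pow_mul]; exact hg1
      have hc : g ^ 2 ∈ Z := involution_central hne h2 this
      apply Subtype.ext
      show (x : G ⧸ Z) ^ 2 = 1
      rw [← hg, ← QuotientGroup.mk_pow, QuotientGroup.eq_one_iff]
      exact hc
    · -- g^4 = cneg : impossible since then g has order 8
      exfalso
      have h8 : g ^ 8 = 1 := by
        rw [show (8:ℕ) = 4 * 2 from rfl, pow_mul, hgc, pow_two]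
        exact cneg_mul_cneg
      have h4ne : g ^ 4 ≠ 1 := by rw [hgc]; exact cneg_ne_one hne
      have hord : orderOf g = 8 := by
        have hdvd : orderOf g ∣ 8 := orderOf_dvd_of_pow_eq_one h8
        have hndvd : ¬ orderOf g ∣ 4 := fun hd => h4ne (orderOf_dvd_iff_pow_eq_one.mp hd)
        have hle : orderOf g ≤ 8 := Nat.le_of_dvd (by norm_num) hdvd
        interval_cases h : orderOf g <;> revert hdvd hndvd <;> decide
      have hzc : Nat.card (Subgroup.zpowers g) = 2 ^ 3 := by
        rw [Nat.card_zpowers, hord]; norm_num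
      obtain ⟨Q', hQ'⟩ := (IsPGroup.of_card hzc).exists_le_sylow
      have hQ'card : Nat.card Q' = 8 := by rw [Q'.card_eq_multiplicity, hfact]; norm_num
      have heq : Subgroup.zpowers g = Q'.toSubgroup :=
        Subgroup.eq_of_le_of_card_ge hQ' (by rw [hQ'card, hzc]; norm_num)
      obtain ⟨e⟩ := part1 Q'
      have hgQ : g ∈ Q'.toSubgroup := heq ▸ Subgroup.mem_zpowers g
      have hordy : orderOf (⟨g, hgQ⟩ : ↥Q'.toSubgroup) = 8 := by
        have h' := orderOf_injective Q'.toSubgroup.subtype Subtype.coe_injective ⟨g, hgQ⟩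
        simp only [Subgroup.coe_subtype] at h'
        exact h'.symm.trans hord
      have hordim : orderOf (e ⟨g, hgQ⟩) = 8 := by
        rw [MulEquiv.orderOf_eq, hordy]
      have hdvd := Monoid.order_dvd_exponent (e ⟨g, hgQ⟩)
      rw [hordim, QuaternionGroup.exponent] at hdvd
      norm_num [Nat.lcm] at hdvd
  haveI : IsKleinFour ↥P.toSubgroup := by
    constructor
    · exact hPcard
    · have hdvd : Monoid.exponent ↥P.toSubgroup ∣ 2 :=
        Monoid.exponent_dvd_of_forall_pow_eq_one hexp
      haveI : Nontrivial ↥P.toSubgroup := by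
        rw [← Finite.one_lt_card_iff_nontrivial, hPcard]
        norm_num
      rcases (Nat.dvd_prime Nat.prime_two).mp hdvd with h1 | h1
      · exfalso
        obtain ⟨u, v, huv⟩ := exists_pair_ne ↥P.toSubgroup
        apply huv
        have hu := Monoid.pow_exponent_eq_one u
        have hv := Monoid.pow_exponent_eq_one v
        rw [h1, pow_one] at hu hv
        rw [hu, hv]
      · exact h1
  haveI : IsKleinFour (Multiplicative (ZMod 2) × Multiplicative (ZMod 2)) := by
    constructor
    · simp [Nat.card_eq_fintype_card]
    · simp [Monoid.exponent_prod]
  exact IsKleinFour.nonempty_mulEquiv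
end
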